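/- arXiv:1410.2626 — 4 statements merged into one kernel-verified Lean document; each statement's English description precedes it below -/
import Mathlib

section
/- Let R ⊆ F_m be a finite set of words and suppose the group G = F_m/⟨⟨R⟩⟩ is residually finite. Then for every sequence (n_k) of positive integers with n_k → ∞ there exist tuples (q_k^1, …, q_k^m) ∈ Sym(n_k)^m such that ξ(q_k^1, …, q_k^m) = id for every ξ ∈ R and every k, and for every word ξ ∈ F_m with ξ ∉ ⟨⟨R⟩⟩ one has lim_{k→∞} d_H(ξ(q_k^1, …, q_k^m), id) = 1. -/
open Filter Topology

/-- The normalized Hamming distance between two permutations of `Fin n`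
(interpreted as `0` when `n = 0`). -/
noncomputable def dH {n : ℕ} (p q : Equiv.Perm (Fin n)) : ℝ :=
  ((Finset.univ.filter fun i => p i ≠ q i).card : ℝ) / n

/-- Evaluation of a word `ξ` of the free group on `m` generators at a tuple of
elements of a group `H`. -/
def evalWord {m : ℕ} {H : Type*} [Group H] (ξ : FreeGroup (Fin m)) (p : Fin m → H) : H :=
  FreeGroup.lift p ξ

/-- A group is residually finite if every nontrivial element survives in some
homomorphism to a finite group. -/
def ResiduallyFinite (G : Type*) [Group G] : Prop :=
  ∀ g : G, g ≠ 1 → ∃ (F : Type) (_ : Group F) (_ : Finite F) (φ : G →* F), φ g ≠ 1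

/-! Enumerate the words as `e 0, e 1, …`. Residual finiteness gives, for each `s`, a finite
quotient `F s` of `G` in which every nontrivial element among the images of `e 0, …, e (s-1)`
survives. Such elements act without fixed points in the left regular action of `F s`; repeating
that action on `⌊n / |F s|⌋` disjoint blocks of `Fin n` and fixing the fewer than `|F s|`
remaining points gives a representation `G → Sym(n)` in which they fix fewer than `|F s|` points.
Letting `s = s k → ∞` slowly enough that `|F (s k)| / n k → 0` gives the theorem. -/

open Finset

lemma dH_one_eq {n : ℕ} (p : Equiv.Perm (Fin n)) : dH p 1 = (#p.support : ℝ) / n :=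
  rfl

lemma dH_le_one {n : ℕ} (p q : Equiv.Perm (Fin n)) : dH p q ≤ 1 := by
  rcases n.eq_zero_or_pos with rfl | hn
  · simp [dH]
  · rw [dH, div_le_one (by exact_mod_cast hn)]
    exact_mod_cast (card_filter_le _ _).trans_eq (card_fin n)

lemma evalWord_of_hom {m : ℕ} {H : Type*} [Group H] (π : FreeGroup (Fin m) →* H)
    (ξ : FreeGroup (Fin m)) : evalWord ξ (fun i => π (FreeGroup.of i)) = π ξ :=
  (FreeGroup.lift_unique π fun _ => rfl).symm

lemma Equiv.Perm.exists_hom_perm_fin_card_mul_div_le_card_support (A : Type*) [Finite A]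
    (n : ℕ) : ∃ Θ : Equiv.Perm A →* Equiv.Perm (Fin n), ∀ σ : Equiv.Perm A, (∀ a, σ a ≠ a) →
      Nat.card A * (n / Nat.card A) ≤ #(Θ σ).support := by
  classical
  set c := Nat.card A
  have : Fintype A := Fintype.ofFinite A
  let E : Fin n ≃ A × Fin (n / c) ⊕ Fin (n % c) := Fintype.equivOfCardEq <| by
    simp [c, Nat.card_eq_fintype_card, Nat.div_add_mod]
  let blocks : Equiv.Perm A →* Equiv.Perm (A × Fin (n / c) ⊕ Fin (n % c)) :=
    { toFun := fun σ => Equiv.sumCongr (Equiv.prodCongr σ 1) 1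
      map_one' := Equiv.ext fun x => by rcases x with ⟨_, _⟩ | _ <;> rfl
      map_mul' := fun _ _ => Equiv.ext fun x => by rcases x with ⟨_, _⟩ | _ <;> rfl }
  refine ⟨E.symm.permCongrHom.toMonoidHom.comp blocks, fun σ hσ => ?_⟩
  let inBlocks : A × Fin (n / c) ↪ Fin n := ⟨fun x => E.symm (Sum.inl x),
    E.symm.injective.comp Sum.inl_injective⟩
  have hsub : univ.map inBlocks ⊆ (E.symm.permCongrHom.toMonoidHom.comp blocks σ).support := by
    intro i hi
    obtain ⟨⟨a, b⟩, -, rfl⟩ := mem_map.1 hi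
    simp [Equiv.Perm.mem_support, inBlocks, blocks, Equiv.permCongr_apply, hσ a]
  calc c * (n / c) = #(univ.map inBlocks) := by simp [c, Nat.card_eq_fintype_card]
    _ ≤ _ := card_le_card hsub

lemma exists_hom_perm_fin_one_sub_card_div_le_dH (F : Type*) [Group F] [Finite F] (n : ℕ) :
    ∃ π : F →* Equiv.Perm (Fin n), ∀ f : F, f ≠ 1 → 0 < n →
      1 - (Nat.card F : ℝ) / n ≤ dH (π f) 1 := by
  obtain ⟨Θ, hΘ⟩ := Equiv.Perm.exists_hom_perm_fin_card_mul_div_le_card_support F n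
  refine ⟨Θ.comp (MulAction.toPermHom F F), fun f hf hn => ?_⟩
  have hsupp := hΘ (MulAction.toPermHom F F f) fun a => by simpa using hf
  have hlt := Nat.lt_div_mul_add (a := n) (Nat.card_pos (α := F))
  have hcover : (n : ℝ) ≤ #(Θ (MulAction.toPermHom F F f)).support + Nat.card F := by
    norm_cast
    rw [mul_comm] at hsupp
    omega
  rw [dH_one_eq, one_sub_div (by positivity), div_le_div_iff_of_pos_right (by positivity)]
  simpa [sub_le_iff_le_add] using hcover

lemma ResiduallyFinite.exists_hom_finite_ne_one {G : Type*} [Group G] (hG : ResiduallyFinite G)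
    (S : Finset G) : ∃ (F : Type) (_ : Group F) (_ : Finite F) (φ : G →* F),
      ∀ g ∈ S, g ≠ 1 → φ g ≠ 1 := by
  classical
  induction S using Finset.induction_on with
  | empty => exact ⟨Unit, inferInstance, inferInstance, 1, by simp⟩
  | insert g S _ ih =>
    obtain ⟨F, _, _, φ, hφ⟩ := ih
    by_cases hg : g = 1
    · exact ⟨F, inferInstance, inferInstance, φ, by simpa [hg] using hφ⟩
    obtain ⟨F', _, _, ψ, hψ⟩ := hG g hg
    refine ⟨F × F', inferInstance, inferInstance, φ.prod ψ, ?_⟩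
    simp only [mem_insert, forall_eq_or_imp, MonoidHom.prod_apply, ne_eq, Prod.mk_eq_one]
    exact ⟨fun _ h => hψ h.2, fun g' hg' h1 h => hφ g' hg' h1 h.1⟩

lemma exists_tendsto_atTop_div_tendsto_zero (c n : ℕ → ℕ) (hn : Tendsto n atTop atTop) :
    ∃ s : ℕ → ℕ, Tendsto s atTop atTop ∧ Tendsto (fun k => (c (s k) : ℝ) / n k) atTop (𝓝 0) := by
  classical
  let fits : ℕ → ℕ → Prop := fun k s => c s * (s + 1) ≤ n k
  set s : ℕ → ℕ := fun k => Nat.findGreatest (fits k) k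
  have hs : Tendsto s atTop atTop := tendsto_atTop.2 fun j => by
    filter_upwards [hn.eventually_ge_atTop (c j * (j + 1)), eventually_ge_atTop j] with k hfit hk
    exact Nat.le_findGreatest hk hfit
  refine ⟨s, hs, tendsto_of_tendsto_of_tendsto_of_le_of_le' tendsto_const_nhds
    (tendsto_one_div_add_atTop_nhds_zero_nat.comp hs) (.of_forall fun k => by positivity) ?_⟩
  filter_upwards [hn.eventually_ge_atTop (c 0), hn.eventually_gt_atTop 0] with k h0 hpos
  have hfit : fits k (s k) := Nat.findGreatest_spec (m := 0) k.zero_le (by simpa [fits] using h0)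
  rw [Function.comp_apply, div_le_div_iff₀ (by positivity) (by positivity), one_mul]
  exact_mod_cast hfit

theorem residually_finite_perfect_representation_general (m : ℕ)
    (R : Finset (FreeGroup (Fin m)))
    (hrf : ResiduallyFinite
      (FreeGroup (Fin m) ⧸ Subgroup.normalClosure (R : Set (FreeGroup (Fin m)))))
    (nk : ℕ → ℕ)
    (hnk : Filter.Tendsto nk Filter.atTop Filter.atTop) :
    ∃ q : (k : ℕ) → Fin m → Equiv.Perm (Fin (nk k)),
      (∀ k, ∀ ξ ∈ R, evalWord ξ (q k) = 1) ∧
      ∀ ξ : FreeGroup (Fin m),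
        ξ ∉ Subgroup.normalClosure (R : Set (FreeGroup (Fin m))) →
        Filter.Tendsto (fun k => dH (evalWord ξ (q k)) 1) Filter.atTop (nhds 1) := by
  classical
  set N := Subgroup.normalClosure (R : Set (FreeGroup (Fin m)))
  obtain ⟨e, he⟩ := exists_surjective_nat (FreeGroup (Fin m))
  choose F _ _ φ hφ using fun s =>
    hrf.exists_hom_finite_ne_one ((range s).image fun j => (e j : FreeGroup (Fin m) ⧸ N))
  obtain ⟨s, hs, hcard⟩ := exists_tendsto_atTop_div_tendsto_zero (fun s => Nat.card (F s)) nk hnk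
  choose π hπ using fun k => exists_hom_perm_fin_one_sub_card_div_le_dH (F (s k)) (nk k)
  let ρ : ∀ k, FreeGroup (Fin m) →* Equiv.Perm (Fin (nk k)) := fun k =>
    (π k).comp ((φ (s k)).comp (QuotientGroup.mk' N))
  refine ⟨fun k i => ρ k (FreeGroup.of i), fun k ξ hξ => ?_, fun ξ hξ => ?_⟩
  · have hrel : (ξ : FreeGroup (Fin m) ⧸ N) = 1 :=
      (QuotientGroup.eq_one_iff ξ).2 (Subgroup.subset_normalClosure hξ)
    rw [evalWord_of_hom (ρ k)]
    change π k (φ (s k) ξ) = 1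
    rw [hrel, map_one, map_one]
  · obtain ⟨j, rfl⟩ := he ξ
    simp only [evalWord_of_hom]
    refine tendsto_of_tendsto_of_tendsto_of_le_of_le' (by simpa using hcard.const_sub 1)
      tendsto_const_nhds ?_ (.of_forall fun k => dH_le_one _ _)
    filter_upwards [hs.eventually_gt_atTop j, hnk.eventually_gt_atTop 0] with k hj hk
    refine hπ k _ (hφ _ _ (mem_image_of_mem _ (mem_range.2 hj)) ?_) hk
    simpa [QuotientGroup.eq_one_iff] using hξ

/-- A residually finite presented group admits a perfect sofic representation
on any sequence of dimensions tending to infinity. -/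
theorem residually_finite_perfect_representation (m : ℕ)
    (R : Finset (FreeGroup (Fin m)))
    (hrf : ResiduallyFinite
      (FreeGroup (Fin m) ⧸ Subgroup.normalClosure (R : Set (FreeGroup (Fin m)))))
    (nk : ℕ → ℕ) (hpos : ∀ k, 0 < nk k)
    (hnk : Filter.Tendsto nk Filter.atTop Filter.atTop) :
    ∃ q : (k : ℕ) → Fin m → Equiv.Perm (Fin (nk k)),
      (∀ k, ∀ ξ ∈ R, evalWord ξ (q k) = 1) ∧
      ∀ ξ : FreeGroup (Fin m),
        ξ ∉ Subgroup.normalClosure (R : Set (FreeGroup (Fin m))) →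
        Filter.Tendsto (fun k => dH (evalWord ξ (q k)) 1) Filter.atTop (nhds 1) :=
  residually_finite_perfect_representation_general m R hrf nk hnk
end

section
/- Let R ⊆ F_m be a finite set of words such that the group G = F_m/⟨⟨R⟩⟩ is sofic. If R is weakly stable in permutations, then G is residually finite. -/
open Filter Topology

/-- `p` is a `δ`-strong solution of `R`. -/
def IsStrongSol {m : ℕ} (R : Finset (FreeGroup (Fin m))) (δ : ℝ) {n : ℕ}
    (p : Fin m → Equiv.Perm (Fin n)) : Prop :=
  ∀ ξ : FreeGroup (Fin m), (FreeGroup.norm ξ : ℝ) < 1 / δ →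
    (ξ ∈ Subgroup.normalClosure (R : Set (FreeGroup (Fin m))) →
      dH (evalWord ξ p) 1 < δ) ∧
    (ξ ∉ Subgroup.normalClosure (R : Set (FreeGroup (Fin m))) →
      1 - δ < dH (evalWord ξ p) 1)

/-- A finite set of words `R ⊆ F_m` is weakly stable in permutations. -/
def WeaklyStable {m : ℕ} (R : Finset (FreeGroup (Fin m))) : Prop :=
  ∀ ε : ℝ, 0 < ε → ∃ δ : ℝ, 0 < δ ∧
    ∀ (n : ℕ) (p : Fin m → Equiv.Perm (Fin n)),
      IsStrongSol R δ p →
      ∃ q : Fin m → Equiv.Perm (Fin n),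
        (∀ ξ ∈ R, evalWord ξ q = 1) ∧ ∀ i, dH (p i) (q i) < ε

/-- A group is sofic: every finite subset admits `(ε)`-multiplicative,
`(1-ε)`-free maps to symmetric groups. -/
def Sofic (G : Type*) [Group G] : Prop :=
  ∀ (E : Finset G) (ε : ℝ), 0 < ε →
    ∃ n : ℕ, 0 < n ∧ ∃ φ : G → Equiv.Perm (Fin n),
      (∀ g ∈ E, ∀ h ∈ E, g * h ∈ E → dH (φ g * φ h) (φ (g * h)) < ε) ∧
      ∀ g ∈ E, g ≠ 1 → 1 - ε < dH (φ g) 1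

/-! Let `w ∉ ⟨⟨R⟩⟩` have length `ℓ ≥ 1`. Soficity of `G` yields `δ`-strong solutions for every
`δ > 0`: send the generators through an `ε`-almost multiplicative map `φ`; then `w(p)` is within
`(3ℓ + 1)ε` of `φ(w)`, since each letter is within `2ε` of its `φ`-image and each multiplication
costs `ε`. Weak stability moves such a `p` by less than `1 / (4ℓ)` per generator to an honest
solution `q`, and by bi-invariance of the Hamming distance this moves `w(p)` by at most `1/4`.
Since `w(p)` is `3/4`-far from the identity, `w(q) ≠ 1`, so `q` is a homomorphism from `G` to a
finite group that does not kill `w`. -/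

namespace Equiv.Perm

variable {n : ℕ}

theorem dH_eq_hammingDist (p q : Perm (Fin n)) : dH p q = hammingDist ⇑p ⇑q / n := rfl

theorem dH_nonneg (p q : Perm (Fin n)) : 0 ≤ dH p q := by
  unfold dH; positivity

@[simp]
theorem dH_self (p : Perm (Fin n)) : dH p p = 0 := by
  simp [dH_eq_hammingDist]

theorem dH_comm (p q : Perm (Fin n)) : dH p q = dH q p := by
  simp only [dH_eq_hammingDist, hammingDist_comm]

theorem dH_triangle (p q r : Perm (Fin n)) : dH p r ≤ dH p q + dH q r := by
  simp only [dH_eq_hammingDist, ← add_div]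
  gcongr
  exact_mod_cast hammingDist_triangle _ _ _

@[simp]
theorem dH_mul_left (r p q : Perm (Fin n)) : dH (r * p) (r * q) = dH p q := by
  simp only [dH_eq_hammingDist]
  congr 2
  exact hammingDist_comp (fun _ => r) fun _ => r.injective

@[simp]
theorem dH_mul_right (p q r : Perm (Fin n)) : dH (p * r) (q * r) = dH p q := by
  simp only [dH_eq_hammingDist, hammingDist]
  congr 2
  exact Finset.card_equiv r fun i => by simp only [Finset.mem_filter]; simp

@[simp]
theorem dH_inv (p q : Perm (Fin n)) : dH p⁻¹ q⁻¹ = dH p q := by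
  rw [← dH_mul_left q, ← dH_mul_right _ _ p]
  simp [mul_assoc, dH_comm]

theorem dH_mul_le (a b c d : Perm (Fin n)) : dH (a * b) (c * d) ≤ dH a c + dH b d := by
  calc dH (a * b) (c * d) ≤ dH (a * b) (a * d) + dH (a * d) (c * d) := dH_triangle _ _ _
    _ = dH a c + dH b d := by rw [dH_mul_left, dH_mul_right, add_comm]

theorem dH_list_prod_le {α : Type*} (f g : α → Perm (Fin n)) {ε : ℝ} :
    ∀ l : List α, (∀ a ∈ l, dH (f a) (g a) ≤ ε) →
      dH (l.map f).prod (l.map g).prod ≤ l.length * ε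
  | [], _ => by simp
  | a :: l, h => by
    simp only [List.map_cons, List.prod_cons, List.length_cons, Nat.cast_succ]
    calc dH (f a * (l.map f).prod) (g a * (l.map g).prod)
        ≤ dH (f a) (g a) + dH (l.map f).prod (l.map g).prod := dH_mul_le _ _ _ _
      _ ≤ ε + l.length * ε :=
        add_le_add (h a List.mem_cons_self)
          (dH_list_prod_le f g l fun b hb => h b (List.mem_cons_of_mem a hb))
      _ = (l.length + 1) * ε := by ring

end Equiv.Perm

open Equiv Perm

section evalWord

variable {m n : ℕ}

theorem evalWord_eq_prod {H : Type*} [Group H] (ξ : FreeGroup (Fin m)) (p : Fin m → H) :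
    evalWord ξ p = (ξ.toWord.map fun x => cond x.2 (p x.1) (p x.1)⁻¹).prod := by
  conv_lhs => rw [← FreeGroup.mk_toWord (x := ξ)]
  exact FreeGroup.lift_mk

theorem dH_evalWord_le (ξ : FreeGroup (Fin m)) {p q : Fin m → Perm (Fin n)} {ε : ℝ}
    (h : ∀ i, dH (p i) (q i) ≤ ε) : dH (evalWord ξ p) (evalWord ξ q) ≤ ξ.norm * ε := by
  rw [evalWord_eq_prod, evalWord_eq_prod]
  exact dH_list_prod_le _ _ _ fun ⟨i, b⟩ _ => by cases b <;> simpa using h i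

end evalWord

def AlmostMulOn {G : Type*} [Mul G] {n : ℕ} (φ : G → Perm (Fin n)) (E : Set G) (ε : ℝ) :
    Prop :=
  ∀ g ∈ E, ∀ h ∈ E, g * h ∈ E → dH (φ g * φ h) (φ (g * h)) < ε

namespace AlmostMulOn

variable {G : Type*} [Group G] {n : ℕ} {φ : G → Perm (Fin n)} {E : Set G} {ε : ℝ}

theorem dH_one (hφ : AlmostMulOn φ E ε) (h1 : 1 ∈ E) : dH (φ 1) 1 < ε := by
  rw [← dH_mul_left (φ 1), mul_one]
  simpa using hφ 1 h1 1 h1 (by simpa using h1)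

theorem nonneg (hφ : AlmostMulOn φ E ε) (h1 : 1 ∈ E) : 0 ≤ ε :=
  (dH_nonneg _ _).trans (hφ.dH_one h1).le

theorem dH_inv (hφ : AlmostMulOn φ E ε) (h1 : 1 ∈ E) {s : G} (hs : s ∈ E) (hs' : s⁻¹ ∈ E) :
    dH (φ s)⁻¹ (φ s⁻¹) < 2 * ε := by
  have hmul : dH (φ s * φ s⁻¹) (φ 1) < ε := by simpa using hφ s hs s⁻¹ hs' (by simpa using h1)
  calc dH (φ s)⁻¹ (φ s⁻¹) = dH (φ s * φ s⁻¹) 1 := by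
        rw [← dH_mul_left (φ s), mul_inv_cancel, dH_comm]
    _ ≤ dH (φ s * φ s⁻¹) (φ 1) + dH (φ 1) 1 := dH_triangle _ _ _
    _ < ε + ε := add_lt_add hmul (hφ.dH_one h1)
    _ = 2 * ε := by ring

variable {L : ℕ}

theorem dH_prod_letters_lt {α : Type*} [DecidableEq α] {π : FreeGroup α →* G}
    (hφ : AlmostMulOn φ E ε) (hE : ∀ ξ, ξ.norm ≤ L → π ξ ∈ E) :
    ∀ l : List (α × Bool), l.length ≤ L →
      dH (l.map fun x => φ (π (FreeGroup.mk [x]))).prod (φ (π (FreeGroup.mk l)))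
        < (l.length + 1) * ε
  | [], _ => by
    simpa [dH_comm, ← FreeGroup.one_eq_mk] using hφ.dH_one (by simpa using hE 1 (by simp))
  | x :: l, hl => by
    have hsplit : FreeGroup.mk (x :: l) = FreeGroup.mk [x] * FreeGroup.mk l := by
      rw [FreeGroup.mul_mk, List.singleton_append]
    have mem (l' : List (α × Bool)) (h : l'.length ≤ L) : π (FreeGroup.mk l') ∈ E :=
      hE _ (FreeGroup.norm_mk_le.trans h)
    have hl' : l.length ≤ L := (Nat.le_succ _).trans hl
    have hx : [x].length ≤ L := (Nat.succ_le_succ (Nat.zero_le _)).trans hl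
    have hmul := hφ _ (mem [x] hx) _ (mem l hl') (by rw [← map_mul, ← hsplit]; exact mem _ hl)
    rw [← map_mul, ← hsplit] at hmul
    simp only [List.map_cons, List.prod_cons, List.length_cons, Nat.cast_succ]
    calc dH (φ (π (FreeGroup.mk [x])) * (l.map fun x => φ (π (FreeGroup.mk [x]))).prod)
          (φ (π (FreeGroup.mk (x :: l))))
        ≤ dH (φ (π (FreeGroup.mk [x])) * (l.map fun x => φ (π (FreeGroup.mk [x]))).prod)
            (φ (π (FreeGroup.mk [x])) * φ (π (FreeGroup.mk l)))
          + dH (φ (π (FreeGroup.mk [x])) * φ (π (FreeGroup.mk l)))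
            (φ (π (FreeGroup.mk (x :: l)))) := dH_triangle _ _ _
      _ < (l.length + 1) * ε + ε := by
        rw [dH_mul_left]
        exact add_lt_add (dH_prod_letters_lt hφ hE l hl') hmul
      _ = (l.length + 1 + 1) * ε := by ring

theorem dH_evalWord_le {m : ℕ} {π : FreeGroup (Fin m) →* G} (hφ : AlmostMulOn φ E ε) (hE : ∀ ξ, ξ.norm ≤ L → π ξ ∈ E)
    {ξ : FreeGroup (Fin m)} (hξ : ξ.norm ≤ L) :
    dH (evalWord ξ fun i => φ (π (FreeGroup.of i))) (φ (π ξ)) ≤ (3 * ξ.norm + 1) * ε := by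
  have h1 : (1 : G) ∈ E := by simpa using hE 1 (by simp)
  have letter : ∀ x ∈ ξ.toWord, dH (cond x.2 (φ (π (.of x.1))) (φ (π (.of x.1)))⁻¹)
      (φ (π (FreeGroup.mk [x]))) ≤ 2 * ε := by
    rintro ⟨i, b⟩ hx
    have hi : (FreeGroup.of i).norm ≤ L := by
      rw [FreeGroup.norm_of]
      exact (List.length_pos_of_mem hx).trans_le hξ
    cases b
    · have hi' : π (FreeGroup.of i)⁻¹ ∈ E := hE _ (by rwa [FreeGroup.norm_inv_eq])
      have hmk : FreeGroup.mk [(i, false)] = (FreeGroup.of i)⁻¹ := rfl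
      simpa [hmk] using (hφ.dH_inv h1 (hE _ hi) (by simpa using hi')).le
    · have hmk : FreeGroup.mk [(i, true)] = FreeGroup.of i := rfl
      simpa [hmk] using mul_nonneg zero_le_two (hφ.nonneg h1)
  calc dH (evalWord ξ fun i => φ (π (FreeGroup.of i))) (φ (π ξ))
      ≤ dH (evalWord ξ fun i => φ (π (FreeGroup.of i)))
          (ξ.toWord.map fun x => φ (π (FreeGroup.mk [x]))).prod
        + dH (ξ.toWord.map fun x => φ (π (FreeGroup.mk [x]))).prod (φ (π ξ)) := dH_triangle _ _ _
    _ ≤ ξ.norm * (2 * ε) + (ξ.norm + 1) * ε := by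
      refine add_le_add ?_ ?_
      · rw [evalWord_eq_prod]
        exact dH_list_prod_le _ _ _ letter
      · have := (hφ.dH_prod_letters_lt hE ξ.toWord hξ).le
        rwa [FreeGroup.mk_toWord] at this
    _ = (3 * ξ.norm + 1) * ε := by ring

end AlmostMulOn

section StrongSolution

variable {m : ℕ} {R : Finset (FreeGroup (Fin m))}

theorem IsStrongSol.mono {n : ℕ} {p : Fin m → Perm (Fin n)} {δ δ' : ℝ} (hp : IsStrongSol R δ p)
    (hδ : 0 < δ) (hδδ' : δ ≤ δ') : IsStrongSol R δ' p := fun ξ hξ =>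
  have hξ' := hξ.trans_le (one_div_le_one_div_of_le hδ hδδ')
  ⟨fun h => ((hp ξ hξ').1 h).trans_le hδδ',
    fun h => (sub_le_sub_left hδδ' 1).trans_lt ((hp ξ hξ').2 h)⟩

theorem exists_isStrongSol_of_sofic
    (hsofic : Sofic (FreeGroup (Fin m) ⧸ Subgroup.normalClosure (R : Set (FreeGroup (Fin m)))))
    {δ : ℝ} (hδ : 0 < δ) : ∃ n, ∃ p : Fin m → Perm (Fin n), IsStrongSol R δ p := by
  set π := QuotientGroup.mk' (Subgroup.normalClosure (R : Set (FreeGroup (Fin m))))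
  set L := ⌈1 / δ⌉₊
  have hball : (π '' {ξ | ξ.norm ≤ L}).Finite :=
    ((List.finite_length_le _ L).preimage FreeGroup.toWord_injective.injOn).image π
  have hE (ξ : FreeGroup (Fin m)) (hξ : ξ.norm ≤ L) : π ξ ∈ hball.toFinset :=
    hball.mem_toFinset.mpr ⟨ξ, hξ, rfl⟩
  set ε := δ / (3 * L + 3)
  have hε : 0 < ε := by positivity
  obtain ⟨n, -, φ, hφ, hfree⟩ := hsofic hball.toFinset ε hε
  replace hφ : AlmostMulOn φ hball.toFinset ε := hφ
  refine ⟨n, fun i => φ (π (.of i)), fun ξ hξ => ?_⟩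
  have hξL : ξ.norm ≤ L := by exact_mod_cast (hξ.trans_le (Nat.le_ceil _)).le
  have hclose := hφ.dH_evalWord_le hE hξL
  have hslack : (3 * ξ.norm + 1) * ε + ε < δ := by
    have hL : (ξ.norm : ℝ) ≤ L := by exact_mod_cast hξL
    calc (3 * ξ.norm + 1) * ε + ε < (3 * L + 3) * ε := by nlinarith
      _ = δ := by simp only [ε]; field_simp
  constructor
  · intro hN
    have hπ : π ξ = 1 := (QuotientGroup.eq_one_iff ξ).mpr hN
    rw [hπ] at hclose
    have h1 := hφ.dH_one (hE 1 (by simp))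
    linarith [dH_triangle (evalWord ξ fun i => φ (π (.of i))) (φ 1) 1]
  · intro hN
    have hfar := hfree (π ξ) (hE ξ hξL) (mt (QuotientGroup.eq_one_iff ξ).mp hN)
    rw [dH_comm] at hclose
    linarith [dH_triangle (φ (π ξ)) (evalWord ξ fun i => φ (π (.of i))) 1]

end StrongSolution

theorem residuallyFinite_of_separating_solutions {m : ℕ} {R : Set (FreeGroup (Fin m))}
    (h : ∀ w ∉ Subgroup.normalClosure R, ∃ n, ∃ q : Fin m → Perm (Fin n),
      (∀ ξ ∈ R, evalWord ξ q = 1) ∧ evalWord w q ≠ 1) :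
    ResiduallyFinite (FreeGroup (Fin m) ⧸ Subgroup.normalClosure R) := by
  intro g hg
  obtain ⟨w, rfl⟩ := QuotientGroup.mk_surjective g
  obtain ⟨n, q, hqR, hqw⟩ := h w (mt (QuotientGroup.eq_one_iff w).mpr hg)
  have hker : Subgroup.normalClosure R ≤ (FreeGroup.lift q).ker :=
    Subgroup.normalClosure_le_normal hqR
  exact ⟨Perm (Fin n), inferInstance, inferInstance, QuotientGroup.lift _ _ hker, hqw⟩

/-- If `G = F_m/⟨⟨R⟩⟩` is sofic and `R` is weakly stable, then `G` is residually
finite. -/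
theorem sofic_weakly_stable_residually_finite (m : ℕ)
    (R : Finset (FreeGroup (Fin m)))
    (hsofic : Sofic
      (FreeGroup (Fin m) ⧸ Subgroup.normalClosure (R : Set (FreeGroup (Fin m)))))
    (hws : WeaklyStable R) :
    ResiduallyFinite
      (FreeGroup (Fin m) ⧸ Subgroup.normalClosure (R : Set (FreeGroup (Fin m)))) := by
  refine residuallyFinite_of_separating_solutions fun w hw => ?_
  have hℓ : (1 : ℝ) ≤ w.norm := by
    refine Nat.one_le_cast.mpr (Nat.one_le_iff_ne_zero.mpr fun h => hw ?_)
    rw [FreeGroup.norm_eq_zero.mp h]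
    exact one_mem _
  set ε := 1 / (4 * (w.norm : ℝ))
  obtain ⟨δ₀, hδ₀, hstab⟩ := hws ε (by positivity)
  set δ := min δ₀ ε
  have hδ : 0 < δ := lt_min hδ₀ (by positivity)
  obtain ⟨n, p, hp⟩ := exists_isStrongSol_of_sofic hsofic hδ
  obtain ⟨q, hqR, hpq⟩ := hstab n p (hp.mono hδ (min_le_left _ _))
  refine ⟨n, q, hqR, fun hq => ?_⟩
  have hwδ : (w.norm : ℝ) < 1 / δ :=
    calc (w.norm : ℝ) < 1 / ε := by simp only [ε, one_div_one_div]; linarith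
      _ ≤ 1 / δ := one_div_le_one_div_of_le hδ (min_le_right _ _)
  have hfar : 1 - δ < dH (evalWord w p) 1 := (hp w hwδ).2 hw
  have hnear : dH (evalWord w p) 1 ≤ w.norm * ε := hq ▸ dH_evalWord_le w fun i => (hpq i).le
  have hεℓ : (w.norm : ℝ) * ε = 1 / 4 := by simp only [ε]; field_simp
  have hδε : δ ≤ 1 / 4 :=
    (min_le_right _ _).trans (one_div_le_one_div_of_le (by norm_num) (by linarith))
  linarith
end

section
/- Let ω be a non-principal ultrafilter on ℕ and (n_k) a sequence of positive integers with n_k → ∞. For each j ∈ ℕ let (C_k^j)_k be a sequence of subsets C_k^j ⊆ Fin(n_k) such that (a) for all i ≠ j, lim_{k→ω} |C_k^i ∩ C_k^j| / n_k = 0, and (b) the series Σ_j (lim_{k→ω} |C_k^j| / n_k) sums to 1. Then there exist subsets A_k^j ⊆ Fin(n_k) such that for every k the family {A_k^j}_{j∈ℕ} is pairwise disjoint with ⋃_j A_k^j = Fin(n_k), and for every j, lim_{k→ω} |A_k^j Δ C_k^j| / n_k = 0 (where Δ denotes symmetric difference). -/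
/-!
Put each point into the first `C j` containing it, and the points lying in no `C j` into the
block of index `0`. Block `j` then differs from `C j` only inside `⋃_{i<j} C i ∩ C j`, which has
density tending to `0`, and, for `j = 0`, by the uncovered points. By the Bonferroni inequality
the density of the uncovered points is at most
`1 - ∑_{j<N} |C j|/n + ∑_{i<j<N} |C i ∩ C j|/n`, whose limit `1 - ∑_{j<N} c j` is arbitrarily small.
-/

open Filter Topology Finset

section FirstFit

variable {α : Type*} [Fintype α]

open Classical in
noncomputable def uncovered (C : ℕ → Finset α) : Finset α := {x | ∀ i, x ∉ C i}

lemma mem_uncovered {C : ℕ → Finset α} {x : α} : x ∈ uncovered C ↔ ∀ i, x ∉ C i := by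
  simp [uncovered]

variable [DecidableEq α]

noncomputable def firstFit (C : ℕ → Finset α) : ℕ → Finset α :=
  disjointed (Function.update C 0 (C 0 ∪ uncovered C))

lemma disjoint_firstFit (C : ℕ → Finset α) {i j : ℕ} (hij : i ≠ j) :
    Disjoint (firstFit C i) (firstFit C j) :=
  disjoint_disjointed _ hij

lemma exists_mem_firstFit (C : ℕ → Finset α) (x : α) : ∃ j, x ∈ firstFit C j := by
  set D := Function.update C 0 (C 0 ∪ uncovered C)
  obtain ⟨i, hi⟩ : ∃ i, x ∈ D i := by
    by_cases h : ∃ i, x ∈ C i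
    · obtain ⟨i, hi⟩ := h
      refine ⟨i, ?_⟩
      rcases eq_or_ne i 0 with rfl | hi0
      · simp [D, hi]
      · simpa [D, hi0] using hi
    · exact ⟨0, by simp [D, mem_uncovered, not_exists.1 h]⟩
  have : x ∈ partialSups (disjointed D) i := by
    rw [partialSups_disjointed]; exact le_partialSups D i hi
  rw [partialSups_apply, sup'_eq_sup, Finset.mem_sup] at this
  obtain ⟨j, -, hj⟩ := this
  exact ⟨j, hj⟩

lemma symmDiff_firstFit_zero_subset (C : ℕ → Finset α) :
    symmDiff (firstFit C 0) (C 0) ⊆ uncovered C := by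
  intro x hx
  simp only [firstFit, disjointed_zero, Function.update_self, mem_symmDiff, mem_union] at hx
  tauto

lemma symmDiff_firstFit_subset {C : ℕ → Finset α} {j : ℕ} (hj : j ≠ 0) :
    symmDiff (firstFit C j) (C j) ⊆ (range j).biUnion fun i ↦ C i ∩ C j := by
  intro x hx
  simp only [firstFit, disjointed_apply, Function.update_of_ne hj, mem_symmDiff, Finset.mem_sdiff,
    Finset.mem_sup, mem_Iio] at hx
  obtain ⟨hxj, i, hij, hxi⟩ :
      x ∈ C j ∧ ∃ i < j, x ∈ Function.update C 0 (C 0 ∪ uncovered C) i := by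
    tauto
  refine mem_biUnion.2 ⟨i, mem_range.2 hij, mem_inter.2 ⟨?_, hxj⟩⟩
  rcases eq_or_ne i 0 with rfl | hi0
  · simp only [Function.update_self, mem_union, mem_uncovered] at hxi
    exact hxi.resolve_right fun h ↦ h j hxj
  · simpa [hi0] using hxi

end FirstFit

lemma Finset.sum_card_le_card_biUnion_add_sum_card_inter {α : Type*} [DecidableEq α]
    (s : ℕ → Finset α) (N : ℕ) :
    ∑ j ∈ range N, #(s j) ≤
      #((range N).biUnion s) + ∑ j ∈ range N, ∑ i ∈ range j, #(s i ∩ s j) := by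
  induction N with
  | zero => simp
  | succ N ih =>
    rw [range_add_one, sum_insert notMem_range_self, sum_insert notMem_range_self,
      biUnion_insert]
    have hinter : #(s N ∩ (range N).biUnion s) ≤ ∑ i ∈ range N, #(s i ∩ s N) := by
      rw [inter_biUnion]
      exact card_biUnion_le.trans (sum_le_sum fun i _ ↦ by rw [inter_comm])
    have := card_union_add_card_inter (s N) ((range N).biUnion s)
    omega

lemma card_uncovered_add_sum_card_le {α : Type*} [Fintype α] [DecidableEq α]
    (C : ℕ → Finset α) (N : ℕ) :
    #(uncovered C) + ∑ j ∈ range N, #(C j) ≤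
      Fintype.card α + ∑ j ∈ range N, ∑ i ∈ range j, #(C i ∩ C j) := by
  have hdisj : Disjoint (uncovered C) ((range N).biUnion C) := by
    simp only [disjoint_left, mem_uncovered, mem_biUnion, not_exists, not_and]
    exact fun x hx i _ ↦ hx i
  have hU : #(uncovered C) + #((range N).biUnion C) ≤ Fintype.card α := by
    rw [← card_union_of_disjoint hdisj]
    exact card_le_univ _
  have := sum_card_le_card_biUnion_add_sum_card_inter C N
  omega

lemma card_uncovered_div_le {α : Type*} [Fintype α] [DecidableEq α]
    (C : ℕ → Finset α) (N : ℕ) :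
    (#(uncovered C) : ℝ) / Fintype.card α ≤
      1 - ∑ j ∈ range N, (#(C j) : ℝ) / Fintype.card α +
        ∑ j ∈ range N, ∑ i ∈ range j, (#(C i ∩ C j) : ℝ) / Fintype.card α := by
  have h : (#(uncovered C) : ℝ) + ∑ j ∈ range N, (#(C j) : ℝ) ≤
      Fintype.card α + ∑ j ∈ range N, ∑ i ∈ range j, (#(C i ∩ C j) : ℝ) := by
    exact_mod_cast card_uncovered_add_sum_card_le C N
  have h' := div_le_div_of_nonneg_right h (Nat.cast_nonneg (Fintype.card α))
  simp only [add_div, sum_div] at h'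
  linarith [div_self_le_one (Fintype.card α : ℝ)]

lemma tendsto_zero_of_le_one_sub_sum {ι : Type*} {l : Filter ι} {u : ι → ℝ}
    {a e : ℕ → ι → ℝ} {c : ℕ → ℝ} (hu : ∀ k, 0 ≤ u k)
    (hle : ∀ N k, u k ≤ 1 - ∑ i ∈ range N, a i k + e N k)
    (ha : ∀ i, Tendsto (a i) l (𝓝 (c i))) (he : ∀ N, Tendsto (e N) l (𝓝 0))
    (hc : HasSum c 1) : Tendsto u l (𝓝 0) := by
  refine tendsto_order.2 ⟨fun b hb ↦ .of_forall fun k ↦ hb.trans_le (hu k), fun ε hε ↦ ?_⟩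
  obtain ⟨N, hN⟩ : ∃ N, 1 - ε < ∑ i ∈ range N, c i :=
    (hc.tendsto_sum_nat.eventually (lt_mem_nhds (by linarith))).exists
  have hlim : Tendsto (fun k ↦ 1 - ∑ i ∈ range N, a i k + e N k) l
      (𝓝 (1 - ∑ i ∈ range N, c i + 0)) :=
    (tendsto_const_nhds.sub (tendsto_finsetSum _ fun i _ ↦ ha i)).add (he N)
  filter_upwards [hlim.eventually (gt_mem_nhds (show _ < ε by linarith))] with k hk
  exact (hle N k).trans_lt hk

section Asymptotic

variable {ι : Type*} {l : Filter ι} {α : ι → Type*} [∀ k, Fintype (α k)]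
  [∀ k, DecidableEq (α k)] {C : ℕ → (k : ι) → Finset (α k)}

lemma tendsto_card_uncovered_div {c : ℕ → ℝ}
    (hdisj : ∀ i j, i ≠ j →
      Tendsto (fun k ↦ (#(C i k ∩ C j k) : ℝ) / Fintype.card (α k)) l (𝓝 0))
    (hc : ∀ j, Tendsto (fun k ↦ (#(C j k) : ℝ) / Fintype.card (α k)) l (𝓝 (c j)))
    (hsum : HasSum c 1) :
    Tendsto (fun k ↦ (#(uncovered (C · k)) : ℝ) / Fintype.card (α k)) l (𝓝 0) := by
  refine tendsto_zero_of_le_one_sub_sum (fun k ↦ by positivity)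
    (fun N k ↦ card_uncovered_div_le (C · k) N) hc (fun N ↦ ?_) hsum
  simpa using tendsto_finsetSum (range N) fun j _ ↦ tendsto_finsetSum (range j)
    fun i hi ↦ hdisj i j (mem_range.1 hi).ne

lemma tendsto_card_symmDiff_firstFit_div {c : ℕ → ℝ}
    (hdisj : ∀ i j, i ≠ j →
      Tendsto (fun k ↦ (#(C i k ∩ C j k) : ℝ) / Fintype.card (α k)) l (𝓝 0))
    (hc : ∀ j, Tendsto (fun k ↦ (#(C j k) : ℝ) / Fintype.card (α k)) l (𝓝 (c j)))
    (hsum : HasSum c 1) (j : ℕ) :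
    Tendsto (fun k ↦ (#(symmDiff (firstFit (C · k) j) (C j k)) : ℝ) / Fintype.card (α k))
      l (𝓝 0) := by
  rcases eq_or_ne j 0 with rfl | hj
  · refine squeeze_zero (fun k ↦ by positivity) (fun k ↦ ?_)
      (tendsto_card_uncovered_div hdisj hc hsum)
    gcongr
    exact symmDiff_firstFit_zero_subset _
  · refine squeeze_zero (fun k ↦ by positivity) (fun k ↦ ?_)
      (by simpa using tendsto_finsetSum (range j) fun i hi ↦ hdisj i j (mem_range.1 hi).ne)
    rw [← sum_div]
    gcongr
    exact_mod_cast (card_le_card (symmDiff_firstFit_subset hj)).trans card_biUnion_le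

end Asymptotic

theorem almost_partition_near_partition_general (ω : Ultrafilter ℕ)
    (nk : ℕ → ℕ)
    (C : ℕ → (k : ℕ) → Finset (Fin (nk k)))
    (hdisj : ∀ i j, i ≠ j →
      Filter.Tendsto (fun k => (((C i k) ∩ (C j k)).card : ℝ) / nk k)
        (ω : Filter ℕ) (nhds 0))
    (c : ℕ → ℝ)
    (hc : ∀ j, Filter.Tendsto (fun k => ((C j k).card : ℝ) / nk k)
      (ω : Filter ℕ) (nhds (c j)))
    (hsum : HasSum c 1) :
    ∃ A : ℕ → (k : ℕ) → Finset (Fin (nk k)),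
      (∀ k, (∀ i j, i ≠ j → Disjoint (A i k) (A j k)) ∧ ∀ x, ∃ j, x ∈ A j k) ∧
      ∀ j, Filter.Tendsto (fun k => ((symmDiff (A j k) (C j k)).card : ℝ) / nk k)
        (ω : Filter ℕ) (nhds 0) := by
  refine ⟨fun j k ↦ firstFit (C · k) j,
    fun k ↦ ⟨fun i j ↦ disjoint_firstFit _, exists_mem_firstFit _⟩, fun j ↦ ?_⟩
  simpa only [Fintype.card_fin] using
    tendsto_card_symmDiff_firstFit_div (α := fun k ↦ Fin (nk k)) (l := ω)
      (by simpa only [Fintype.card_fin] using hdisj) (by simpa only [Fintype.card_fin] using hc)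
      hsum j

/-- Almost disjoint families of subsets of asymptotically full total measure can be
corrected, along a non-principal ultrafilter, to genuine partitions. -/
theorem almost_partition_near_partition (ω : Ultrafilter ℕ)
    (hω : Filter.cofinite ≤ (ω : Filter ℕ))
    (nk : ℕ → ℕ) (hpos : ∀ k, 0 < nk k)
    (hnk : Filter.Tendsto nk Filter.atTop Filter.atTop)
    (C : ℕ → (k : ℕ) → Finset (Fin (nk k)))
    (hdisj : ∀ i j, i ≠ j →
      Filter.Tendsto (fun k => (((C i k) ∩ (C j k)).card : ℝ) / nk k)
        (ω : Filter ℕ) (nhds 0))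
    (c : ℕ → ℝ)
    (hc : ∀ j, Filter.Tendsto (fun k => ((C j k).card : ℝ) / nk k)
      (ω : Filter ℕ) (nhds (c j)))
    (hsum : HasSum c 1) :
    ∃ A : ℕ → (k : ℕ) → Finset (Fin (nk k)),
      (∀ k, (∀ i j, i ≠ j → Disjoint (A i k) (A j k)) ∧ ∀ x, ∃ j, x ∈ A j k) ∧
      ∀ j, Filter.Tendsto (fun k => ((symmDiff (A j k) (C j k)).card : ℝ) / nk k)
        (ω : Filter ℕ) (nhds 0) :=
  almost_partition_near_partition_general ω nk C hdisj c hc hsum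
end

section
/- Let ω be a non-principal ultrafilter on ℕ, (n_k) a sequence of positive integers with n_k → ∞, R ⊆ F_m a finite set of words, and (p_k^1, …, p_k^m) ∈ Sym(n_k)^m tuples with lim_{k→ω} d_H(ξ(p_k^1, …, p_k^m), id) = 0 for every ξ ∈ R. Suppose for each k a partition {A_k^j}_{j∈ℕ} of Fin(n_k) into pairwise disjoint subsets with ⋃_j A_k^j = Fin(n_k) is given, satisfying: (a) Σ_j (lim_{k→ω} |A_k^j| / n_k) = 1; (b) each block is almost invariant, i.e. lim_{k→ω} |p_k^i(A_k^j) Δ A_k^j| / n_k = 0 for all i ∈ {1, …, m} and all j; (c) for each j there exist bijections q_k^{j,i} : A_k^j → A_k^j (i = 1, …, m) such that for every k the tuple (q_k^{j,1}, …, q_k^{j,m}), viewed in the symmetric group of A_k^j, satisfies ξ(q_k^{j,1}, …, q_k^{j,m}) = id for every ξ ∈ R, and lim_{k→ω} |{x ∈ A_k^j : p_k^i(x) ≠ q_k^{j,i}(x)}| / n_k = 0 for every i. Then there exist tuples (q_k^1, …, q_k^m) ∈ Sym(n_k)^m with ξ(q_k^1, …, q_k^m) = id for every ξ ∈ R and every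 k, and lim_{k→ω} d_H(p_k^i, q_k^i) = 0 for every i. -/
open Filter Topology

/-! Glue the exact block solutions `q' j k` into one permutation of `Fin (nk k)`. Gluing is a
group homomorphism `∏ⱼ Sym(A_k^j) → Sym(nk k)`, so the glued tuple satisfies every relation of `R`.
On each block of a finite set `S` of blocks it disagrees with `p k` on an asymptotically negligible
proportion of points, and the points outside these blocks have asymptotic proportion
`1 - ∑_{j ∈ S} c j`, which is small for `S` large since `∑ c = 1`. -/

section Glue

open Equiv Function

variable {α ι : Type*}

theorem existsUnique_mem_of_pairwise_disjoint {A : ι → Set α} (hdisj : Pairwise (Disjoint on A))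
    (hcov : ∀ x, ∃ j, x ∈ A j) (x : α) : ∃! j, x ∈ A j := by
  obtain ⟨j, hj⟩ := hcov x
  refine ⟨j, hj, fun i hi => ?_⟩
  by_contra hij
  exact Set.disjoint_left.1 (hdisj hij) hi hj

noncomputable def gluePerm (A : ι → Set α) (hA : ∀ x, ∃! j, x ∈ A j) :
    (∀ j, Perm (A j)) →* Perm α :=
  (Set.sigmaEquiv A hA).permCongrHom.toMonoidHom.comp (Perm.sigmaCongrRightHom _)

theorem gluePerm_apply {A : ι → Set α} (hA : ∀ x, ∃! j, x ∈ A j) (σ : ∀ j, Perm (A j))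
    {x : α} {j : ι} (hx : x ∈ A j) : gluePerm A hA σ x = σ j ⟨x, hx⟩ := by
  have hsymm : (Set.sigmaEquiv A hA).symm x = ⟨j, x, hx⟩ :=
    (Equiv.symm_apply_eq _).2 rfl
  simp only [gluePerm, MulEquiv.toMonoidHom_eq_coe, MonoidHom.coe_comp, MonoidHom.coe_coe,
    permCongrHom_coe, comp_apply, Perm.sigmaCongrRightHom_apply, permCongr_apply, hsymm,
    sigmaCongrRight_apply]
  rfl

end Glue

section Words

variable {m : ℕ} {H K : Type*} [Group H] [Group K]

theorem evalWord_map (f : H →* K) (ξ : FreeGroup (Fin m)) (p : Fin m → H) :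
    evalWord ξ (fun a => f (p a)) = f (evalWord ξ p) := by
  show FreeGroup.lift _ ξ = (f.comp (FreeGroup.lift p)) ξ
  congr 1
  ext a
  simp

theorem evalWord_pi_apply {ι : Type*} {G : ι → Type*} [∀ j, Group (G j)] (ξ : FreeGroup (Fin m))
    (p : Fin m → ∀ j, G j) (j : ι) : evalWord ξ p j = evalWord ξ (fun a => p a j) :=
  (evalWord_map (Pi.evalMonoidHom G j) ξ p).symm

end Words

section Counting

open Finset Function Equiv

variable {α β ι : Type*} [DecidableEq α]

theorem card_filter_ne_add_sum_card_le [Fintype α] [DecidableEq β] (f g : α → β) {A : ι → Finset α}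
    (hdisj : Pairwise (Disjoint on A)) (S : Finset ι) :
    #{x | f x ≠ g x} + ∑ j ∈ S, #(A j) ≤ ∑ j ∈ S, #{x ∈ A j | f x ≠ g x} + Fintype.card α := by
  set U := S.biUnion A
  set F : Finset α := {x | f x ≠ g x}
  have hU : #U = ∑ j ∈ S, #(A j) := card_biUnion fun i _ j _ hij => hdisj hij
  have hin : #(F ∩ U) ≤ ∑ j ∈ S, #{x ∈ A j | f x ≠ g x} := by
    have hFU : F ∩ U = S.biUnion fun j => {x ∈ A j | f x ≠ g x} := by
      ext x
      simp only [ne_eq, mem_inter, mem_filter, mem_univ, true_and, mem_biUnion, F, U]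
      aesop
    rw [hFU]
    exact card_biUnion_le
  have hout : #(F \ U) + #U ≤ Fintype.card α := by
    rw [← card_union_of_disjoint sdiff_disjoint]
    exact card_le_univ _
  rw [← hU, ← card_inter_add_card_sdiff F U]
  omega

theorem card_attach_filter_ne_gluePerm (p : Perm α) {A : ι → Finset α}
    (hA : ∀ x, ∃! j, x ∈ A j) (σ : ∀ j, Perm (A j)) (j : ι) :
    #{x ∈ A j | p x ≠ gluePerm (fun j => (A j : Set α)) hA σ x} =
      #((A j).attach.filter fun x => p x.1 ≠ (σ j x : α)) := by
  have hσ (x : A j) : (σ j x : α) = gluePerm (fun j => (A j : Set α)) hA σ x :=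
    (gluePerm_apply hA σ x.2).symm
  simp only [hσ]
  rw [filter_attach (fun x => p x ≠ gluePerm (fun j => (A j : Set α)) hA σ x), card_map,
    card_attach]

theorem dH_le_sum_add_one_sub_sum {n : ℕ} (p q : Perm (Fin n)) {A : ι → Finset (Fin n)}
    (hdisj : Pairwise (Disjoint on A)) (S : Finset ι) :
    dH p q ≤ ∑ j ∈ S, (#{x ∈ A j | p x ≠ q x} : ℝ) / n + (1 - ∑ j ∈ S, (#(A j) : ℝ) / n) := by
  have hcount := card_filter_ne_add_sum_card_le p q hdisj S
  rw [Fintype.card_fin] at hcount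
  have hcount' : (#{x | p x ≠ q x} : ℝ) ≤
      ∑ j ∈ S, (#{x ∈ A j | p x ≠ q x} : ℝ) + n - ∑ j ∈ S, (#(A j) : ℝ) := by
    have := (Nat.cast_le (α := ℝ)).2 hcount
    push_cast at this
    linarith
  calc dH p q = (#{x | p x ≠ q x} : ℝ) / n := rfl
    _ ≤ (∑ j ∈ S, (#{x ∈ A j | p x ≠ q x} : ℝ) + n - ∑ j ∈ S, (#(A j) : ℝ)) / n := by gcongr
    _ = ∑ j ∈ S, (#{x ∈ A j | p x ≠ q x} : ℝ) / n + ((n : ℝ) / n - ∑ j ∈ S, (#(A j) : ℝ) / n) := by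
      rw [← sum_div, ← sum_div]; ring
    _ ≤ _ := by gcongr; exact div_self_le_one _

end Counting

theorem tendsto_nhds_zero_of_le_sum_add_one_sub_sum {β ι : Type*} {l : Filter β} {d : β → ℝ}
    {a b : ι → β → ℝ} {c : ι → ℝ} (hc : HasSum c 1) (hd : ∀ k, 0 ≤ d k)
    (hle : ∀ S k, d k ≤ ∑ j ∈ S, a j k + (1 - ∑ j ∈ S, b j k))
    (ha : ∀ j, Tendsto (a j) l (𝓝 0)) (hb : ∀ j, Tendsto (b j) l (𝓝 (c j))) :
    Tendsto d l (𝓝 0) := by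
  refine tendsto_order.2 ⟨fun x hx => .of_forall fun k => hx.trans_le (hd k), fun ε hε => ?_⟩
  obtain ⟨S, hS⟩ : ∃ S : Finset ι, 1 - ε < ∑ j ∈ S, c j :=
    (hc.eventually (lt_mem_nhds (by linarith))).exists
  have hlim : Tendsto (fun k => ∑ j ∈ S, a j k + (1 - ∑ j ∈ S, b j k)) l
      (𝓝 (∑ j ∈ S, 0 + (1 - ∑ j ∈ S, c j))) :=
    (tendsto_finsetSum S fun j _ => ha j).add
      ((tendsto_finsetSum S fun j _ => hb j).const_sub 1)
  have hsmall : ∑ j ∈ S, (0 : ℝ) + (1 - ∑ j ∈ S, c j) < ε := by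
    rw [Finset.sum_const_zero]; linarith
  filter_upwards [hlim.eventually_lt_const hsmall] with k hk
  exact (hle S k).trans_lt hk

theorem partial_perfect_implies_perfect_general (m : ℕ) (R : Finset (FreeGroup (Fin m)))
    (ω : Ultrafilter ℕ)
    (nk : ℕ → ℕ)
    (p : (k : ℕ) → Fin m → Equiv.Perm (Fin (nk k)))
    (A : ℕ → (k : ℕ) → Finset (Fin (nk k)))
    (hpart : ∀ k, (∀ i j, i ≠ j → Disjoint (A i k) (A j k)) ∧ ∀ x, ∃ j, x ∈ A j k)
    (c : ℕ → ℝ)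
    (hc : ∀ j, Filter.Tendsto (fun k => ((A j k).card : ℝ) / nk k)
      (ω : Filter ℕ) (nhds (c j)))
    (hsum : HasSum c 1)
    (q' : (j : ℕ) → (k : ℕ) → Fin m → Equiv.Perm (A j k))
    (hq'sol : ∀ j k, ∀ ξ ∈ R, evalWord ξ (q' j k) = 1)
    (hq'close : ∀ (i : Fin m) (j : ℕ),
      Filter.Tendsto
        (fun k => (((A j k).attach.filter
          fun x => p k i x.1 ≠ (q' j k i x : Fin (nk k))).card : ℝ) / nk k)
        (ω : Filter ℕ) (nhds 0)) :
    ∃ q : (k : ℕ) → Fin m → Equiv.Perm (Fin (nk k)),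
      (∀ k, ∀ ξ ∈ R, evalWord ξ (q k) = 1) ∧
      ∀ i, Filter.Tendsto (fun k => dH (p k i) (q k i)) (ω : Filter ℕ) (nhds 0) := by
  have hdisj (k : ℕ) : Pairwise fun i j => Disjoint (A i k) (A j k) :=
    fun i j => (hpart k).1 i j
  have hA (k : ℕ) : ∀ x, ∃! j, x ∈ (A j k : Set (Fin (nk k))) :=
    existsUnique_mem_of_pairwise_disjoint (fun i j hij => Finset.disjoint_coe.2 (hdisj k hij))
      (hpart k).2
  let q (k : ℕ) (i : Fin m) : Equiv.Perm (Fin (nk k)) :=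
    gluePerm (fun j => (A j k : Set (Fin (nk k)))) (hA k) fun j => q' j k i
  refine ⟨q, fun k ξ hξ => ?_, fun i => ?_⟩
  · have hblocks : evalWord ξ (fun i j => q' j k i) = 1 :=
      funext fun j => (evalWord_pi_apply ξ _ j).trans (hq'sol j k ξ hξ)
    rw [evalWord_map, hblocks, map_one]
  · refine tendsto_nhds_zero_of_le_sum_add_one_sub_sum hsum (fun k => by unfold dH; positivity)
      (fun S k => ?_) (hq'close i) hc
    simpa only [q, card_attach_filter_ne_gluePerm] using
      dH_le_sum_add_one_sub_sum (p k i) (q k i) (hdisj k) S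

/-- Cutting an asymptotic solution along an almost invariant partition: if each
block carries exact solutions asymptotically agreeing with the given almost
solution, then the almost solution is asymptotically close to a sequence of
exact solutions. -/
theorem partial_perfect_implies_perfect (m : ℕ) (R : Finset (FreeGroup (Fin m)))
    (ω : Ultrafilter ℕ) (hω : Filter.cofinite ≤ (ω : Filter ℕ))
    (nk : ℕ → ℕ) (hpos : ∀ k, 0 < nk k)
    (hnk : Filter.Tendsto nk Filter.atTop Filter.atTop)
    (p : (k : ℕ) → Fin m → Equiv.Perm (Fin (nk k)))
    (hp : ∀ ξ ∈ R, Filter.Tendsto (fun k => dH (evalWord ξ (p k)) 1)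
      (ω : Filter ℕ) (nhds 0))
    (A : ℕ → (k : ℕ) → Finset (Fin (nk k)))
    (hpart : ∀ k, (∀ i j, i ≠ j → Disjoint (A i k) (A j k)) ∧ ∀ x, ∃ j, x ∈ A j k)
    (c : ℕ → ℝ)
    (hc : ∀ j, Filter.Tendsto (fun k => ((A j k).card : ℝ) / nk k)
      (ω : Filter ℕ) (nhds (c j)))
    (hsum : HasSum c 1)
    (hinv : ∀ (i : Fin m) (j : ℕ),
      Filter.Tendsto
        (fun k => ((symmDiff ((A j k).image (p k i)) (A j k)).card : ℝ) / nk k)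
        (ω : Filter ℕ) (nhds 0))
    (q' : (j : ℕ) → (k : ℕ) → Fin m → Equiv.Perm (A j k))
    (hq'sol : ∀ j k, ∀ ξ ∈ R, evalWord ξ (q' j k) = 1)
    (hq'close : ∀ (i : Fin m) (j : ℕ),
      Filter.Tendsto
        (fun k => (((A j k).attach.filter
          fun x => p k i x.1 ≠ (q' j k i x : Fin (nk k))).card : ℝ) / nk k)
        (ω : Filter ℕ) (nhds 0)) :
    ∃ q : (k : ℕ) → Fin m → Equiv.Perm (Fin (nk k)),
      (∀ k, ∀ ξ ∈ R, evalWord ξ (q k) = 1) ∧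
      ∀ i, Filter.Tendsto (fun k => dH (p k i) (q k i)) (ω : Filter ℕ) (nhds 0) :=
  partial_perfect_implies_perfect_general m R ω nk p A hpart c hc hsum q' hq'sol hq'close
end
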